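/- Let N ∈ ℕ, e ∈ ℝ, and let M be the (N+1)×(N+1) real matrix whose entries are M_{m,n} = (A^N · D^N)_{m,n} − e·√(2(N+1)/T) · a_{m, N+1} when n = N, and M_{m,n} = (A^N · D^N)_{m,n} otherwise. Then M is skew-symmetric: M + Mᵀ = 0. (This expresses that the first modified matrix D̄^N = D^N + (A^N)^{−1}·A₁₂^N·D₂₁^N is skew-symmetric with respect to the truncated Gram matrix: A^N·D̄^N + (D̄^N)ᵀ·A^N = 0.) -/

import Mathlib

open Real MeasureTheory Matrix Filter

/-- Physicists' Hermite polynomials: H_0 = 1, H_1 = 2x, H_{n+1} = 2x H_n - 2n H_{n-1}. -/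
noncomputable def hermiteH : ℕ → ℝ → ℝ
  | 0, _ => 1
  | 1, x => 2 * x
  | (n + 2), x => 2 * x * hermiteH (n + 1) x - 2 * (n + 1) * hermiteH n x

/-- Asymmetric Hermite basis function ψ_m. -/
noncomputable def psi (T : ℝ) (m : ℕ) (v : ℝ) : ℝ :=
  Real.exp (-v ^ 2 / T) * T ^ (-(1 : ℝ) / 2) *
    ((2 : ℝ) ^ m * (Nat.factorial m : ℝ) * Real.sqrt π) ^ (-(1 : ℝ) / 2) *
    hermiteH m (v / Real.sqrt T)

/-- Gram coefficient a_{m,n} = ∫ ψ_m ψ_n. -/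
noncomputable def gramA (T : ℝ) (m n : ℕ) : ℝ := ∫ v : ℝ, psi T m v * psi T n v

/-- Truncated transport matrix D^N. -/
noncomputable def Dmat (T : ℝ) (e : ℝ) (N : ℕ) : Matrix (Fin (N + 1)) (Fin (N + 1)) ℝ :=
  fun m n => if (n : ℕ) + 1 = (m : ℕ) then -e * Real.sqrt (2 * (m : ℝ) / T) else 0

/-- Truncated Gram matrix A^N. -/
noncomputable def Amat (T : ℝ) (N : ℕ) : Matrix (Fin (N + 1)) (Fin (N + 1)) ℝ :=
  fun m n => gramA T (m : ℕ) (n : ℕ)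

/-!
Write `α m = √(2(m+1)/T)`. The recurrence gives `H_{m+1}(x) = 2x H_m(x) - H_m'(x)`, and with the
normalisation of `ψ_m` this becomes the ladder relation `ψ_m' = -α m • ψ_{m+1}`. The products
`ψ_m ψ_n` are Gaussians times polynomials, so `(ψ_m ψ_n)'` integrates to zero over `ℝ`:
`α m * a (m+1) n + α n * a m (n+1) = 0`. Column `n < N` of `A^N D^N` is `-e α n a (·, n+1)`,
and the correction term supplies exactly this for the last column, so
`M m n = -e α n a m (n+1)` for all `m, n`; by the symmetry of `a` the relation above is `M + Mᵀ = 0`.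
-/

open Polynomial

theorem hasDerivAt_hermiteH : ∀ (m : ℕ) (x : ℝ),
    HasDerivAt (hermiteH m) (2 * x * hermiteH m x - hermiteH (m + 1) x) x
  | 0, x => by simpa [hermiteH] using hasDerivAt_const x (1 : ℝ)
  | 1, x => by
      have hfun : hermiteH 1 = fun y => 2 * y := rfl
      rw [hfun]
      refine ((hasDerivAt_id x).const_mul 2).congr_deriv ?_
      simp [hermiteH]
  | (n + 2), x => by
      have hfun : hermiteH (n + 2) =
          fun y => 2 * y * hermiteH (n + 1) y - 2 * ((n : ℝ) + 1) * hermiteH n y :=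
        rfl
      rw [hfun]
      refine ((((hasDerivAt_id x).const_mul 2).mul (hasDerivAt_hermiteH (n + 1) x)).sub
        ((hasDerivAt_hermiteH n x).const_mul (2 * ((n : ℝ) + 1)))).congr_deriv ?_
      simp only [hermiteH, id]
      push_cast
      ring

theorem exists_eval_eq_hermiteH : ∀ m : ℕ, ∃ p : ℝ[X], ∀ x, hermiteH m x = p.eval x
  | 0 => ⟨1, fun x => by simp [hermiteH]⟩
  | 1 => ⟨2 * X, fun x => by simp [hermiteH]⟩
  | (n + 2) => by
      obtain ⟨p, hp⟩ := exists_eval_eq_hermiteH (n + 1)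
      obtain ⟨q, hq⟩ := exists_eval_eq_hermiteH n
      exact ⟨2 * X * p - C (2 * ((n : ℝ) + 1)) * q, fun x => by simp [hermiteH, hp, hq]⟩

theorem integrable_exp_neg_mul_sq_mul_eval {b : ℝ} (hb : 0 < b) (p : ℝ[X]) :
    Integrable fun v : ℝ => exp (-b * v ^ 2) * p.eval v := by
  induction p using Polynomial.induction_on' with
  | add p q hp hq => exact (hp.add hq).congr (.of_forall fun v => by simp [mul_add])
  | monomial i c =>
      have h := integrable_rpow_mul_exp_neg_mul_sq hb (s := i)
        (neg_one_lt_zero.trans_le i.cast_nonneg)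
      simp only [rpow_natCast] at h
      exact (h.const_mul c).congr (.of_forall fun v => by simp only [neg_mul, eval_monomial]; ring)

theorem rpow_neg_one_div_two {x : ℝ} (hx : 0 ≤ x) : x ^ (-(1 : ℝ) / 2) = (√x)⁻¹ := by
  rw [neg_div, rpow_neg hx, sqrt_eq_rpow]

section Basis

variable {T : ℝ}

theorem exists_psi_eq_exp_mul_eval (m : ℕ) :
    ∃ p : ℝ[X], ∀ v, psi T m v = exp (-v ^ 2 / T) * p.eval v := by
  obtain ⟨q, hq⟩ := exists_eval_eq_hermiteH m
  refine ⟨C (T ^ (-(1 : ℝ) / 2) * ((2 : ℝ) ^ m * (Nat.factorial m : ℝ) * √π) ^ (-(1 : ℝ) / 2)) *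
    q.comp (X * C (√T)⁻¹), fun v => ?_⟩
  simp only [psi, hq, eval_mul, eval_C, eval_comp, eval_X, ← div_eq_mul_inv v]
  ring

theorem integrable_psi_mul_psi (hT : 0 < T) (m n : ℕ) :
    Integrable fun v => psi T m v * psi T n v := by
  obtain ⟨p, hp⟩ := exists_psi_eq_exp_mul_eval m
  obtain ⟨q, hq⟩ := exists_psi_eq_exp_mul_eval n
  refine (integrable_exp_neg_mul_sq_mul_eval (by positivity : 0 < 2 / T) (p * q)).congr
    (.of_forall fun v => ?_)
  dsimp only
  rw [hp, hq, eval_mul, show -(2 / T) * v ^ 2 = -v ^ 2 / T + -v ^ 2 / T by ring, exp_add]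
  ring

theorem hasDerivAt_exp_mul_hermiteH (hT : 0 < T) (m : ℕ) (v : ℝ) :
    HasDerivAt (fun w => exp (-w ^ 2 / T) * hermiteH m (w / √T))
      (-(√T)⁻¹ * (exp (-v ^ 2 / T) * hermiteH (m + 1) (v / √T))) v := by
  have hexp : HasDerivAt (fun w => exp (-w ^ 2 / T)) (exp (-v ^ 2 / T) * (-(2 * v) / T)) v := by
    simpa using ((hasDerivAt_pow 2 v).neg.div_const T).exp
  have hH : HasDerivAt (fun w => hermiteH m (w / √T))
      ((2 * (v / √T) * hermiteH m (v / √T) - hermiteH (m + 1) (v / √T)) * (√T)⁻¹) v :=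
    (hasDerivAt_hermiteH m (v / √T)).comp v (by simpa using (hasDerivAt_id v).div_const √T)
  refine (hexp.mul hH).congr_deriv ?_
  have hsq : √T ^ 2 = T := sq_sqrt hT.le
  have hs : √T ≠ 0 := (sqrt_pos.2 hT).ne'
  field_simp
  rw [hsq]
  ring

theorem psi_eq_inv_sqrt_mul_exp_mul_hermiteH (hT : 0 ≤ T) (m : ℕ) (v : ℝ) :
    psi T m v = (√T)⁻¹ * (√((2 : ℝ) ^ m * (Nat.factorial m : ℝ) * √π))⁻¹ *
      (exp (-v ^ 2 / T) * hermiteH m (v / √T)) := by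
  rw [psi, rpow_neg_one_div_two hT, rpow_neg_one_div_two (by positivity)]
  ring

theorem hasDerivAt_psi (hT : 0 < T) (m : ℕ) (v : ℝ) :
    HasDerivAt (psi T m) (-√(2 * ((m : ℝ) + 1) / T) * psi T (m + 1) v) v := by
  have hnorm : √((2 : ℝ) ^ (m + 1) * (Nat.factorial (m + 1) : ℝ) * √π) =
      √(2 * ((m : ℝ) + 1)) * √((2 : ℝ) ^ m * (Nat.factorial m : ℝ) * √π) := by
    rw [← sqrt_mul (by positivity), Nat.factorial_succ, pow_succ]
    push_cast
    ring_nf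
  rw [funext (psi_eq_inv_sqrt_mul_exp_mul_hermiteH hT.le m),
    psi_eq_inv_sqrt_mul_exp_mul_hermiteH hT.le, hnorm, sqrt_div (by positivity)]
  refine ((hasDerivAt_exp_mul_hermiteH hT m v).const_mul _).congr_deriv ?_
  have hs : √T ≠ 0 := (sqrt_pos.2 hT).ne'
  have hm : √(2 * ((m : ℝ) + 1)) ≠ 0 := by positivity
  have hP : √((2 : ℝ) ^ m * (Nat.factorial m : ℝ) * √π) ≠ 0 := by positivity
  field_simp

theorem gramA_comm (m n : ℕ) : gramA T m n = gramA T n m := by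
  simp only [gramA, mul_comm]

theorem sqrt_mul_gramA_succ_add_sqrt_mul_gramA_succ_eq_zero (hT : 0 < T) (m n : ℕ) :
    √(2 * ((m : ℝ) + 1) / T) * gramA T (m + 1) n +
      √(2 * ((n : ℝ) + 1) / T) * gramA T m (n + 1) = 0 := by
  have hderiv : ∀ v, HasDerivAt (fun w => psi T m w * psi T n w)
      (-(√(2 * ((m : ℝ) + 1) / T) * (psi T (m + 1) v * psi T n v) +
        √(2 * ((n : ℝ) + 1) / T) * (psi T m v * psi T (n + 1) v))) v := fun v =>
    ((hasDerivAt_psi hT m v).mul (hasDerivAt_psi hT n v)).congr_deriv (by ring)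
  have h₁ := (integrable_psi_mul_psi hT (m + 1) n).const_mul √(2 * ((m : ℝ) + 1) / T)
  have h₂ := (integrable_psi_mul_psi hT m (n + 1)).const_mul √(2 * ((n : ℝ) + 1) / T)
  have h := integral_eq_zero_of_hasDerivAt_of_integrable hderiv (h₁.add h₂).neg
    (integrable_psi_mul_psi hT m n)
  rwa [integral_neg, integral_add h₁ h₂, integral_const_mul, integral_const_mul,
    neg_eq_zero] at h

end Basis

theorem Amat_mul_Dmat_apply (T e : ℝ) (N : ℕ) (m n : Fin (N + 1)) :
    (Amat T N * Dmat T e N) m n =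
      if (n : ℕ) < N then -e * √(2 * ((n : ℝ) + 1) / T) * gramA T m (n + 1) else 0 := by
  simp only [mul_apply, Amat, Dmat, mul_ite, mul_zero]
  rw [Fin.sum_univ_eq_sum_range
    (fun k => if (n : ℕ) + 1 = k then gramA T m k * (-e * √(2 * (k : ℝ) / T)) else 0),
    Finset.sum_ite_eq]
  simp only [Finset.mem_range, Nat.add_lt_add_iff_right, Nat.cast_add, Nat.cast_one]
  split_ifs <;> ring

theorem modified_matrix_skew (T : ℝ) (hT : 0 < T) (N : ℕ) (e : ℝ)
    (M : Matrix (Fin (N + 1)) (Fin (N + 1)) ℝ)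
    (hM : ∀ m n : Fin (N + 1),
      M m n = if (n : ℕ) = N then
          (Amat T N * Dmat T e N) m n -
            e * Real.sqrt (2 * ((N : ℝ) + 1) / T) * gramA T (m : ℕ) (N + 1)
        else (Amat T N * Dmat T e N) m n) :
    M + Mᵀ = 0 := by
  have hentry : ∀ m n : Fin (N + 1),
      M m n = -e * √(2 * ((n : ℝ) + 1) / T) * gramA T m (n + 1) := by
    intro m n
    rw [hM, Amat_mul_Dmat_apply]
    by_cases hn : (n : ℕ) = N
    · simp only [hn, lt_irrefl, if_true, if_false]
      ring
    · simp only [hn, lt_of_le_of_ne (Nat.lt_succ_iff.1 n.2) hn, if_true, if_false]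
  ext m n
  rw [Matrix.add_apply, transpose_apply, Matrix.zero_apply, hentry, hentry, gramA_comm n]
  linear_combination (-e) * sqrt_mul_gramA_succ_add_sqrt_mul_gramA_succ_eq_zero hT m n
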